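/- arXiv:1310.1891 — 3 statements merged into one kernel-verified Lean document; each statement's English description precedes it below -/
import Mathlib

section
/- Let q be a prime power, n ≥ 1, and L ≥ 1 an integer. Let Λ be a finite nonempty set of vectors in 𝔽_q^n with |Λ| ≤ L, and let Λ' ⊆ Λ be a random subset obtained by including each element of Λ independently with probability 1/2. Then for every coordinate j ∈ {1,…,n} and every v ≥ 0: Pr[ |Λ'|² · (pl_j(Λ) − pl_j(Λ'))² > v ] ≤ 4L · exp( −v / (2 · pl_j(Λ) · |Λ|) ). -/
open Finset

noncomputable section

/-- The (fractional) plurality of coordinate `j` for a finite set `Λ` of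
vectors: `pl_j(Λ) = (1/|Λ|)·max_α |{c ∈ Λ : c j = α}|`, with `pl_j(∅) = 0`. -/
def pl {F : Type} [Fintype F] [DecidableEq F] {n : ℕ}
    (Λ : Finset (Fin n → F)) (j : Fin n) : ℝ :=
  ((Λ.card : ℝ))⁻¹ *
    ((Finset.univ.sup (fun α : F => (Λ.filter (fun c => c j = α)).card) : ℕ) : ℝ)

open Real

/-! With `p = pl_j(Λ)` and `M = p·|Λ|` the plurality count of `Λ` at `j`, the deviation
`|Λ'|·(p - pl_j(Λ'))` equals `|Λ'|·p - M'`, where `M'` is the plurality count of `Λ'`.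
If it exceeds `√v`, then so does the sum over `Λ'` of the weights `p - 1[c_j = α]`, for `α` a
plurality symbol of `Λ`; if it is below `-√v`, then so does the sum of `1[c_j = β] - p`, for `β`
a plurality symbol of `Λ'`, which occurs in `Λ`. Every such weight has mean `≤ 0` over `Λ` and
square sum `≤ M` (because `0 ≤ p ≤ 1`), so Hoeffding's inequality for a uniformly random subset,
obtained from the exponential moment method and `cosh x ≤ exp (x ^ 2 / 2)`, bounds each of these
at most `1 + L` events by `exp (-2v/M) ≤ exp (-v/(2M))`. -/

section Hoeffding

variable {ι : Type*}

theorem exp_add_one_le_two_mul_exp (x : ℝ) : exp x + 1 ≤ 2 * exp (x / 2 + x ^ 2 / 8) := by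
  have hcosh := cosh_le_exp_half_sq (x / 2)
  rw [cosh_eq] at hcosh
  calc exp x + 1 = exp (x / 2) * (exp (x / 2) + exp (-(x / 2))) := by
        rw [mul_add, ← exp_add, ← exp_add]
        norm_num
    _ = 2 * exp (x / 2) * ((exp (x / 2) + exp (-(x / 2))) / 2) := by ring
    _ ≤ 2 * exp (x / 2) * exp ((x / 2) ^ 2 / 2) := by gcongr
    _ = 2 * exp (x / 2 + x ^ 2 / 8) := by rw [mul_assoc, ← exp_add]; ring_nf

theorem sum_powerset_exp_mul_sum_le (s : Finset ι) (w : ι → ℝ) (lam : ℝ) {B : ℝ}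
    (hw : ∑ i ∈ s, w i ^ 2 ≤ B) :
    ∑ u ∈ s.powerset, exp (lam * ∑ i ∈ u, w i)
      ≤ 2 ^ #s * exp (lam * (∑ i ∈ s, w i) / 2 + lam ^ 2 * B / 8) := by
  calc ∑ u ∈ s.powerset, exp (lam * ∑ i ∈ u, w i) = ∏ i ∈ s, (exp (lam * w i) + 1) := by
        simp only [prod_add_one, mul_sum, exp_sum]
    _ ≤ ∏ i ∈ s, 2 * exp (lam * w i / 2 + (lam * w i) ^ 2 / 8) :=
        prod_le_prod (fun _ _ => by positivity) fun i _ => exp_add_one_le_two_mul_exp _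
    _ = 2 ^ #s * exp (lam * (∑ i ∈ s, w i) / 2 + lam ^ 2 * (∑ i ∈ s, w i ^ 2) / 8) := by
        rw [prod_mul_distrib, prod_const, ← exp_sum, sum_add_distrib, ← sum_div, ← sum_div,
          mul_sum, mul_sum]
        simp only [mul_pow]
    _ ≤ _ := by gcongr

theorem card_filter_lt_mul_exp_le_sum_exp {α : Type*} (T : Finset α) (g : α → ℝ) (a : ℝ)
    {lam : ℝ} (hlam : 0 ≤ lam) :
    #(T.filter fun u => a < g u) * exp (lam * a) ≤ ∑ u ∈ T, exp (lam * g u) := by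
  rw [← nsmul_eq_mul]
  calc #(T.filter fun u => a < g u) • exp (lam * a)
      ≤ ∑ u ∈ T.filter fun u => a < g u, exp (lam * g u) :=
        card_nsmul_le_sum _ _ _ fun u hu => by gcongr; exact (mem_filter.1 hu).2.le
    _ ≤ ∑ u ∈ T, exp (lam * g u) :=
        sum_le_sum_of_subset_of_nonneg (filter_subset _ _) fun _ _ _ => (exp_pos _).le

theorem card_powerset_filter_half_sum_add_lt_le (s : Finset ι) (w : ι → ℝ) {t B : ℝ}
    (ht : 0 ≤ t) (hB : 0 < B) (hw : ∑ i ∈ s, w i ^ 2 ≤ B) :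
    (#(s.powerset.filter fun u => (∑ i ∈ s, w i) / 2 + t < ∑ i ∈ u, w i) : ℝ)
      ≤ 2 ^ #s * exp (-2 * t ^ 2 / B) := by
  -- `lam = 4t/B` minimises `lam ^ 2 * B / 8 - lam * t`
  set lam := 4 * t / B
  set μ := (∑ i ∈ s, w i) / 2
  have hmarkov := (card_filter_lt_mul_exp_le_sum_exp s.powerset (fun u => ∑ i ∈ u, w i) (μ + t)
    (by positivity : 0 ≤ lam)).trans (sum_powerset_exp_mul_sum_le s w lam hw)
  rw [← le_div_iff₀ (exp_pos _), mul_div_assoc, ← exp_sub] at hmarkov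
  refine hmarkov.trans_eq ?_
  congr 2
  simp only [lam, μ]
  field_simp
  ring

theorem card_powerset_filter_lt_sum_le_of_sum_nonpos (s : Finset ι) (w : ι → ℝ) {t B : ℝ}
    (ht : 0 ≤ t) (hB : 0 < B) (hw : ∑ i ∈ s, w i ^ 2 ≤ B) (hmean : ∑ i ∈ s, w i ≤ 0) :
    (#(s.powerset.filter fun u => t < ∑ i ∈ u, w i) : ℝ) ≤ 2 ^ #s * exp (-2 * t ^ 2 / B) := by
  refine le_trans ?_ (card_powerset_filter_half_sum_add_lt_le s w ht hB hw)
  gcongr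
  linarith

end Hoeffding

section Plurality

variable {F : Type} [Fintype F] [DecidableEq F] {n : ℕ} (Λ : Finset (Fin n → F)) (j : Fin n)

def pluralityCount : ℕ := univ.sup fun α : F => #(Λ.filter fun c => c j = α)

theorem card_mul_pl : (#Λ : ℝ) * pl Λ j = pluralityCount Λ j := by
  rcases Λ.eq_empty_or_nonempty with rfl | hΛ
  · simp only [card_empty, Nat.cast_zero, zero_mul, pluralityCount, filter_empty]
    exact_mod_cast (sup_bot (α := ℕ) univ).symm
  · exact mul_inv_cancel_left₀ (by exact_mod_cast hΛ.card_pos.ne') _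

theorem card_filter_le_pluralityCount (α : F) :
    #(Λ.filter fun c => c j = α) ≤ pluralityCount Λ j :=
  le_sup (f := fun α : F => #(Λ.filter fun c => c j = α)) (mem_univ α)

theorem pluralityCount_le_card : pluralityCount Λ j ≤ #Λ :=
  Finset.sup_le fun _ _ => card_filter_le _ _

theorem pl_nonneg : 0 ≤ pl Λ j := by unfold pl; positivity

theorem pl_le_one : pl Λ j ≤ 1 := by
  rcases Λ.eq_empty_or_nonempty with rfl | hΛ
  · simp [pl]
  have hN : (0 : ℝ) < #Λ := by exact_mod_cast hΛ.card_pos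
  have hNp := card_mul_pl Λ j
  have hMN : (pluralityCount Λ j : ℝ) ≤ #Λ := by exact_mod_cast pluralityCount_le_card Λ j
  nlinarith

def pluralityWeight (α : F) (c : Fin n → F) : ℝ := (if c j = α then 1 else 0) - pl Λ j

theorem sum_pluralityWeight (α : F) (u : Finset (Fin n → F)) :
    ∑ c ∈ u, pluralityWeight Λ j α c = #(u.filter fun c => c j = α) - #u * pl Λ j := by
  simp only [pluralityWeight, sum_sub_distrib, sum_boole, sum_const, nsmul_eq_mul]

theorem sum_pluralityWeight_nonpos (α : F) : ∑ c ∈ Λ, pluralityWeight Λ j α c ≤ 0 := by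
  rw [sum_pluralityWeight, card_mul_pl, sub_nonpos]
  exact_mod_cast card_filter_le_pluralityCount Λ j α

theorem sum_pluralityWeight_eq_zero {α : F}
    (hα : #(Λ.filter fun c => c j = α) = pluralityCount Λ j) :
    ∑ c ∈ Λ, pluralityWeight Λ j α c = 0 := by
  rw [sum_pluralityWeight, card_mul_pl, hα, sub_self]

theorem sum_sq_pluralityWeight_le (α : F) :
    ∑ c ∈ Λ, pluralityWeight Λ j α c ^ 2 ≤ pluralityCount Λ j := by
  have hsq : ∀ c, pluralityWeight Λ j α c ^ 2
      = (if c j = α then 1 else 0) * (1 - 2 * pl Λ j) + pl Λ j ^ 2 := by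
    intro c
    by_cases h : c j = α <;> simp only [pluralityWeight, h, if_true, if_false] <;> ring
  have hm : (#(Λ.filter fun c => c j = α) : ℝ) ≤ pluralityCount Λ j := by
    exact_mod_cast card_filter_le_pluralityCount Λ j α
  have hNp : (#Λ : ℝ) * pl Λ j ^ 2 = pluralityCount Λ j * pl Λ j := by
    rw [sq, ← mul_assoc, card_mul_pl]
  simp only [hsq, sum_add_distrib, ← sum_mul, sum_boole, sum_const, nsmul_eq_mul, hNp]
  -- `m (1 - 2p) + M p ≤ M` rearranges to `(M - m)(1 - p) + m p ≥ 0`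
  nlinarith [mul_nonneg (sub_nonneg.2 hm) (sub_nonneg.2 (pl_le_one Λ j)),
    mul_nonneg (Nat.cast_nonneg (α := ℝ) #(Λ.filter fun c => c j = α)) (pl_nonneg Λ j)]

variable {Λ}

theorem pluralityCount_pos (hΛ : Λ.Nonempty) : 0 < pluralityCount Λ j := by
  obtain ⟨c, hc⟩ := hΛ
  have hc' : c ∈ Λ.filter fun c' => c' j = c j := mem_filter.2 ⟨hc, rfl⟩
  exact (card_pos.2 ⟨c, hc'⟩).trans_le (card_filter_le_pluralityCount Λ j (c j))

theorem exists_mem_image_card_filter_eq_pluralityCount (hΛ : Λ.Nonempty) :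
    ∃ α ∈ Λ.image (· j), #(Λ.filter fun c => c j = α) = pluralityCount Λ j := by
  obtain ⟨α, -, hα⟩ := exists_mem_eq_sup univ ⟨hΛ.choose j, mem_univ _⟩
    fun α : F => #(Λ.filter fun c => c j = α)
  obtain ⟨c', hc'⟩ := card_pos.1 ((pluralityCount_pos j hΛ).trans_eq hα)
  rw [mem_filter] at hc'
  exact ⟨α, mem_image.2 ⟨c', hc'.1, hc'.2⟩, hα.symm⟩

theorem lt_sum_pluralityWeight_of_sq_lt {u : Finset (Fin n → F)} (hu : u ⊆ Λ) {t : ℝ}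
    (ht : 0 ≤ t) (h : t ^ 2 < (#u : ℝ) ^ 2 * (pl Λ j - pl u j) ^ 2) :
    (∀ α, t < ∑ c ∈ u, -pluralityWeight Λ j α c) ∨
      ∃ β ∈ Λ.image (· j), t < ∑ c ∈ u, pluralityWeight Λ j β c := by
  have hdev : t < |#u * pl Λ j - pluralityCount u j| := by
    rw [← card_mul_pl, ← abs_of_nonneg ht, ← sq_lt_sq]
    linarith
  rcases lt_abs.1 hdev with hup | hdown
  · refine Or.inl fun α => ?_
    have hα : (#(u.filter fun c => c j = α) : ℝ) ≤ pluralityCount u j := by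
      exact_mod_cast card_filter_le_pluralityCount u j α
    rw [sum_neg_distrib, sum_pluralityWeight]
    linarith
  · have hu₀ : u.Nonempty := by
      rw [nonempty_iff_ne_empty]
      rintro rfl
      simp only [card_empty, Nat.cast_zero, sq, zero_mul] at h
      nlinarith
    obtain ⟨β, hβ, hβM⟩ := exists_mem_image_card_filter_eq_pluralityCount j hu₀
    refine Or.inr ⟨β, image_subset_image hu hβ, ?_⟩
    rw [sum_pluralityWeight, hβM]
    linarith

theorem card_powerset_filter_lt_sq_pl_sub_le (hΛ : Λ.Nonempty) {v : ℝ} (hv : 0 ≤ v) :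
    (#(Λ.powerset.filter fun u => v < (#u : ℝ) ^ 2 * (pl Λ j - pl u j) ^ 2) : ℝ)
      ≤ (1 + #(Λ.image (· j))) * (2 ^ #Λ * exp (-2 * v / pluralityCount Λ j)) := by
  have hM : (0 : ℝ) < pluralityCount Λ j := by exact_mod_cast pluralityCount_pos j hΛ
  obtain ⟨α, -, hα⟩ := exists_mem_image_card_filter_eq_pluralityCount j hΛ
  let tail (w : (Fin n → F) → ℝ) := Λ.powerset.filter fun u => √v < ∑ c ∈ u, w c
  have htail (w : (Fin n → F) → ℝ) (hw : ∑ c ∈ Λ, w c ^ 2 ≤ pluralityCount Λ j)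
      (hmean : ∑ c ∈ Λ, w c ≤ 0) :
      (#(tail w) : ℝ) ≤ 2 ^ #Λ * exp (-2 * v / pluralityCount Λ j) := by
    simpa only [sq_sqrt hv] using
      card_powerset_filter_lt_sum_le_of_sum_nonpos Λ w (sqrt_nonneg v) hM hw hmean
  have hsub : Λ.powerset.filter (fun u => v < (#u : ℝ) ^ 2 * (pl Λ j - pl u j) ^ 2)
      ⊆ tail (fun c => -pluralityWeight Λ j α c) ∪
        (Λ.image (· j)).biUnion fun β => tail (pluralityWeight Λ j β) := by
    intro u hu
    rw [mem_filter, mem_powerset] at hu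
    have hdev : √v ^ 2 < (#u : ℝ) ^ 2 * (pl Λ j - pl u j) ^ 2 := by rw [sq_sqrt hv]; exact hu.2
    rcases lt_sum_pluralityWeight_of_sq_lt j hu.1 (sqrt_nonneg v) hdev with
      hup | ⟨β, hβ, hdown⟩
    · exact mem_union_left _ (mem_filter.2 ⟨mem_powerset.2 hu.1, hup α⟩)
    · exact mem_union_right _ (mem_biUnion.2 ⟨β, hβ, mem_filter.2 ⟨mem_powerset.2 hu.1, hdown⟩⟩)
  have hup := htail (fun c => -pluralityWeight Λ j α c)
    (by simpa only [neg_sq] using sum_sq_pluralityWeight_le Λ j α)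
    (by rw [sum_neg_distrib, sum_pluralityWeight_eq_zero Λ j hα, neg_zero])
  have hdown (β : F) := htail _ (sum_sq_pluralityWeight_le Λ j β) (sum_pluralityWeight_nonpos Λ j β)
  calc (#(Λ.powerset.filter fun u => v < (#u : ℝ) ^ 2 * (pl Λ j - pl u j) ^ 2) : ℝ)
      ≤ #(tail fun c => -pluralityWeight Λ j α c) +
          ∑ β ∈ Λ.image (· j), (#(tail (pluralityWeight Λ j β)) : ℝ) := by
        exact_mod_cast (card_le_card hsub).trans
          ((card_union_le _ _).trans (Nat.add_le_add_left card_biUnion_le _))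
    _ ≤ _ := by
        rw [add_mul, one_mul, ← nsmul_eq_mul]
        exact add_le_add hup (sum_le_card_nsmul _ _ _ fun β _ => hdown β)

end Plurality

theorem stmt_12_general
    {F : Type} [Fintype F] [DecidableEq F]
    (n : ℕ) (L : ℕ) (hL : 1 ≤ L)
    (Λ : Finset (Fin n → F)) (hne : Λ.Nonempty) (hcard : Λ.card ≤ L)
    (j : Fin n) (v : ℝ) (hv : 0 ≤ v) :
    ((Λ.powerset.filter (fun Λ' =>
        v < (Λ'.card : ℝ) ^ 2 * (pl Λ j - pl Λ' j) ^ 2)).card : ℝ)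
        / 2 ^ Λ.card
      ≤ 4 * L * Real.exp (-v / (2 * pl Λ j * Λ.card)) := by
  have hM : (0 : ℝ) < pluralityCount Λ j := by exact_mod_cast pluralityCount_pos j hne
  have hsymbols : (1 + #(Λ.image (· j)) : ℝ) ≤ 4 * L := by
    have : (#(Λ.image (· j)) : ℝ) ≤ L := by exact_mod_cast card_image_le.trans hcard
    have : (1 : ℝ) ≤ L := by exact_mod_cast hL
    linarith
  have hexp : exp (-2 * v / pluralityCount Λ j) ≤ exp (-v / (2 * pl Λ j * #Λ)) := by
    rw [mul_assoc, mul_comm (pl Λ j), card_mul_pl, exp_le_exp,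
      div_le_div_iff₀ hM (by positivity)]
    nlinarith
  rw [div_le_iff₀ (by positivity)]
  calc _ ≤ _ := card_powerset_filter_lt_sq_pl_sub_le j hne hv
    _ ≤ 4 * L * (2 ^ #Λ * exp (-v / (2 * pl Λ j * #Λ))) := by gcongr
    _ = _ := by ring

/-- tail bound from the proof of Lemma 6.2: if `Λ'` is a
uniformly random half-density subset of `Λ` (probability written as a
normalized count over all `2^|Λ|` subsets), then for every coordinate `j` and
every `v ≥ 0`,
`Pr[|Λ'|²(pl_j(Λ) − pl_j(Λ'))² > v] ≤ 4L·exp(−v/(2·pl_j(Λ)·|Λ|))`. -/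
theorem stmt_12
    {F : Type} [Field F] [Fintype F] [DecidableEq F]
    (n : ℕ) (hn : 1 ≤ n) (L : ℕ) (hL : 1 ≤ L)
    (Λ : Finset (Fin n → F)) (hne : Λ.Nonempty) (hcard : Λ.card ≤ L)
    (j : Fin n) (v : ℝ) (hv : 0 ≤ v) :
    ((Λ.powerset.filter (fun Λ' =>
        v < (Λ'.card : ℝ) ^ 2 * (pl Λ j - pl Λ' j) ^ 2)).card : ℝ)
        / 2 ^ Λ.card
      ≤ 4 * L * Real.exp (-v / (2 * pl Λ j * Λ.card)) :=
  stmt_12_general n L hL Λ hne hcard j v hv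
end
end

section
/- Let q be a prime power, 0 < ε ≤ 1, and let c' : 𝔽_q^k → 𝔽_q^{n'} be an injective map with d(c'(x), c'(y)) ≥ 1 − 1/q − ε²/2 for all distinct x, y ∈ 𝔽_q^k. Let L be an integer with 2/ε² ≤ L ≤ q^k, let n ≥ 1, and let c be a randomly sampled version of c' of block length n. Then for every subset Λ ⊆ 𝔽_q^k with |Λ| = L: 𝔼[ max over z ∈ 𝔽_q^n of Σ_{x∈Λ} agr(c(x), z) ] ≤ n·L·(1/q + ε), where the expectation is over the random sampling. -/
/-!
Write `N_t(a)` for the number of words of `Λ` whose `t`-th symbol is `a`. For a sample `s` and a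
word `z`, `∑_{x ∈ Λ} agr(c' x ∘ s, z) = ∑_j N_{s j}(z j)`, so the maximum over `z` is at most
`∑_j B(s j)` for any `B(t) ≥ max_a N_t(a)`, and averaging over `s` leaves `n · 𝔼_t B(t)`.
Take `B(t) = L/q + √(∑_a (N_t(a) - L/q)²)`. As `∑_t ∑_a N_t(a)²` counts the pairwise agreements
of `c'` on `Λ`, the distance hypothesis bounds the total squared deviation by `n' L² ε²`
(the diagonal is absorbed using `L ε² ≥ 2`), and Cauchy–Schwarz gives `∑_t B(t) ≤ n' L (1/q + ε)`:
this is the average-radius Johnson bound.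
-/

open Finset

noncomputable section

/-- `agr u v` is the number of coordinates on which `u` and `v` agree. -/
def agr {F : Type} [DecidableEq F] {n : ℕ} (u v : Fin n → F) : ℕ :=
  (Finset.univ.filter (fun j => u j = v j)).card

/-- `rdist u v` is the relative Hamming distance between `u` and `v`. -/
def rdist {F : Type} [DecidableEq F] {n : ℕ} (u v : Fin n → F) : ℝ :=
  ((Finset.univ.filter (fun j => u j ≠ v j)).card : ℝ) / n

section Agreement

variable {F : Type} [DecidableEq F] {m : ℕ}

lemma agr_eq_sum_ite (u v : Fin m → F) : agr u v = ∑ j, if u j = v j then 1 else 0 :=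
  card_filter _ _

lemma agr_self (u : Fin m → F) : agr u u = m := by
  simp [agr]

lemma agr_eq_mul_one_sub_rdist (u v : Fin m → F) : (agr u v : ℝ) = m * (1 - rdist u v) := by
  rcases eq_or_ne m 0 with rfl | hm
  · simp [agr]
  have hsplit := card_filter_add_card_filter_not (s := univ) (p := fun j => u j = v j)
  rw [card_univ, Fintype.card_fin] at hsplit
  rw [rdist, mul_sub, mul_div_cancel₀ _ (Nat.cast_ne_zero.2 hm), mul_one, agr,
    eq_sub_iff_add_eq]
  exact_mod_cast hsplit

end Agreement

section FiniteSums

variable {α : Type*} [Fintype α]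

lemma sum_sq_sub_sum_div_card (f : α → ℝ) :
    ∑ a, (f a - (∑ b, f b) / Fintype.card α) ^ 2
      = ∑ a, f a ^ 2 - (∑ a, f a) ^ 2 / Fintype.card α := by
  simp only [sub_sq, sum_add_distrib, sum_sub_distrib, ← sum_mul, ← mul_sum, sum_const,
    card_univ, nsmul_eq_mul]
  rcases eq_or_ne (Fintype.card α : ℝ) 0 with h | h
  · simp [h]
  · field_simp
    ring

lemma le_add_sqrt_sum_sq_sub (f : α → ℝ) (c : ℝ) (a : α) :
    f a ≤ c + √(∑ b, (f b - c) ^ 2) := by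
  have hsq : (f a - c) ^ 2 ≤ ∑ b, (f b - c) ^ 2 :=
    single_le_sum (f := fun b => (f b - c) ^ 2) (fun _ _ => sq_nonneg _) (mem_univ a)
  linarith [Real.le_sqrt_of_sq_le hsq]

lemma sum_sqrt_le_sqrt_card_mul_sum {ι : Type*} (s : Finset ι) {g : ι → ℝ}
    (hg : ∀ i, 0 ≤ g i) :
    ∑ i ∈ s, √(g i) ≤ √(#s * ∑ i ∈ s, g i) := by
  simpa [Real.sqrt_mul (Nat.cast_nonneg _)] using
    Real.sum_sqrt_mul_sqrt_le s (f := fun _ => 1) (fun _ => zero_le_one) hg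

lemma inv_card_mul_sum_sum_comp_apply (ι : Type*) [Fintype ι] [DecidableEq ι] (f : α → ℝ) :
    (Fintype.card (ι → α) : ℝ)⁻¹ * ∑ s : ι → α, ∑ i, f (s i)
      = Fintype.card ι * ((Fintype.card α : ℝ)⁻¹ * ∑ a, f a) := by
  have hslice (i : ι) : ∑ s : ι → α, f (s i)
      = Fintype.card α ^ (Fintype.card ι - 1) * ∑ a, f a := by
    simpa [← Fintype.piFinset_univ] using Fintype.sum_piFinset_apply f univ i
  rw [sum_comm, Fintype.sum_congr _ _ hslice, sum_const, card_univ, nsmul_eq_mul,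
    Fintype.card_fun]
  cases Fintype.card ι with
  | zero => simp
  | succ k =>
    rcases eq_or_ne (Fintype.card α : ℝ) 0 with h | h
    · simp [h]
    · push_cast
      field_simp
      ring

end FiniteSums

section ColumnCounts

variable {ι F : Type} [DecidableEq F] {m : ℕ} (w : ι → Fin m → F) (Λ : Finset ι)

def columnCount (t : Fin m) (a : F) : ℕ := #{x ∈ Λ | w x t = a}

lemma columnCount_eq_sum_ite (t : Fin m) (a : F) :
    columnCount w Λ t a = ∑ x ∈ Λ, if w x t = a then 1 else 0 :=
  card_filter _ _

lemma sum_sum_agr_le {A : ℝ}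
    (hA : ∀ x ∈ Λ, ∀ y ∈ Λ, x ≠ y → (agr (w x) (w y) : ℝ) ≤ A) :
    ∑ x ∈ Λ, ∑ y ∈ Λ, (agr (w x) (w y) : ℝ) ≤ #Λ * (m + (#Λ - 1) * A) := by
  classical
  rw [← nsmul_eq_mul, ← sum_const]
  refine sum_le_sum fun x hx => ?_
  have hothers : ∑ y ∈ Λ.erase x, (agr (w x) (w y) : ℝ) ≤ #(Λ.erase x) • A :=
    sum_le_card_nsmul _ _ _ fun y hy => hA x hx y (mem_of_mem_erase hy) (ne_of_mem_erase hy).symm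
  rw [← add_sum_erase _ _ hx, agr_self]
  rw [card_erase_of_mem hx, nsmul_eq_mul, Nat.cast_pred (card_pos.2 ⟨x, hx⟩)] at hothers
  linarith

lemma sum_agr_comp_eq {n : ℕ} (s : Fin n → Fin m) (z : Fin n → F) :
    ∑ x ∈ Λ, agr (fun j => w x (s j)) z = ∑ j, columnCount w Λ (s j) (z j) := by
  simp only [agr_eq_sum_ite, columnCount_eq_sum_ite]
  exact sum_comm

variable [Fintype F]

lemma sum_columnCount (t : Fin m) : ∑ a, columnCount w Λ t a = #Λ :=
  (card_eq_sum_card_fiberwise fun x _ => mem_univ (w x t)).symm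

lemma sum_columnCount_sq (t : Fin m) :
    ∑ a, columnCount w Λ t a ^ 2
      = ∑ x ∈ Λ, ∑ y ∈ Λ, if w x t = w y t then 1 else 0 := by
  simp only [sq, columnCount_eq_sum_ite, sum_mul_sum]
  rw [sum_comm]
  refine sum_congr rfl fun x _ => ?_
  rw [sum_comm]
  refine sum_congr rfl fun y _ => ?_
  simp only [ite_mul, one_mul, zero_mul, sum_ite_eq, mem_univ, if_true]
  exact if_congr eq_comm rfl rfl

lemma sum_sum_columnCount_sq :
    ∑ t, ∑ a, columnCount w Λ t a ^ 2 = ∑ x ∈ Λ, ∑ y ∈ Λ, agr (w x) (w y) := by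
  simp only [sum_columnCount_sq, agr_eq_sum_ite]
  rw [sum_comm]
  exact sum_congr rfl fun x _ => sum_comm

def columnDev (t : Fin m) : ℝ :=
  ∑ a, ((columnCount w Λ t a : ℝ) - #Λ / Fintype.card F) ^ 2

def columnBound (t : Fin m) : ℝ :=
  #Λ / Fintype.card F + √(columnDev w Λ t)

lemma columnCount_le_columnBound (t : Fin m) (a : F) :
    (columnCount w Λ t a : ℝ) ≤ columnBound w Λ t :=
  le_add_sqrt_sum_sq_sub (fun a => (columnCount w Λ t a : ℝ)) _ a

lemma columnBound_nonneg (t : Fin m) : 0 ≤ columnBound w Λ t := by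
  unfold columnBound
  positivity

lemma columnDev_eq (t : Fin m) :
    columnDev w Λ t
      = ∑ a, (columnCount w Λ t a : ℝ) ^ 2 - (#Λ : ℝ) ^ 2 / Fintype.card F := by
  have h := sum_sq_sub_sum_div_card fun a => (columnCount w Λ t a : ℝ)
  simp only [← Nat.cast_sum, sum_columnCount] at h
  exact h

lemma sum_columnDev_le {ε : ℝ} (hΛ : 2 ≤ #Λ * ε ^ 2)
    (hagr : ∀ x ∈ Λ, ∀ y ∈ Λ, x ≠ y →
      (agr (w x) (w y) : ℝ) ≤ m * (1 / Fintype.card F + ε ^ 2 / 2)) :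
    ∑ t, columnDev w Λ t ≤ m * (#Λ * ε) ^ 2 := by
  have hpairs := sum_sum_agr_le w Λ hagr
  have hsq : ∑ t, ∑ a, (columnCount w Λ t a : ℝ) ^ 2
      = ∑ x ∈ Λ, ∑ y ∈ Λ, (agr (w x) (w y) : ℝ) := by
    exact_mod_cast sum_sum_columnCount_sq w Λ
  simp only [columnDev_eq, sum_sub_distrib, hsq, sum_const, card_univ, Fintype.card_fin,
    nsmul_eq_mul]
  have hLm : (0 : ℝ) ≤ #Λ * m := by positivity
  -- the diagonal contributes `#Λ * m`, which `2 ≤ #Λ * ε ^ 2` absorbs into half of the budget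
  linear_combination hpairs + (1 / 2) * mul_le_mul_of_nonneg_left hΛ hLm +
    mul_nonneg hLm (by positivity : (0 : ℝ) ≤ 1 / Fintype.card F) +
    (1 / 2) * mul_nonneg hLm (sq_nonneg ε)

theorem sum_columnBound_le {ε : ℝ} (hε : 0 ≤ ε) (hΛ : 2 ≤ #Λ * ε ^ 2)
    (hagr : ∀ x ∈ Λ, ∀ y ∈ Λ, x ≠ y →
      (agr (w x) (w y) : ℝ) ≤ m * (1 / Fintype.card F + ε ^ 2 / 2)) :
    ∑ t, columnBound w Λ t ≤ m * #Λ * (1 / Fintype.card F + ε) := by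
  have hdev_nonneg (t : Fin m) : 0 ≤ columnDev w Λ t := by
    unfold columnDev
    positivity
  have hsqrt : ∑ t, √(columnDev w Λ t) ≤ m * (#Λ * ε) :=
    calc ∑ t, √(columnDev w Λ t) ≤ √(m * ∑ t, columnDev w Λ t) := by
          simpa using sum_sqrt_le_sqrt_card_mul_sum univ hdev_nonneg
      _ ≤ √((m * (#Λ * ε)) ^ 2) := by
          gcongr
          nlinarith [sum_columnDev_le w Λ hΛ hagr]
      _ = m * (#Λ * ε) := Real.sqrt_sq (by positivity)
  simp only [columnBound, sum_add_distrib, sum_const, card_univ, Fintype.card_fin, nsmul_eq_mul]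
  linear_combination hsqrt

lemma iSup_sum_agr_comp_le {n : ℕ} (s : Fin n → Fin m) :
    ⨆ z : Fin n → F, ∑ x ∈ Λ, (agr (fun j => w x (s j)) z : ℝ)
      ≤ ∑ j, columnBound w Λ (s j) := by
  refine Real.iSup_le (fun z => ?_) (sum_nonneg fun j _ => columnBound_nonneg w Λ (s j))
  rw [← Nat.cast_sum, sum_agr_comp_eq, Nat.cast_sum]
  exact sum_le_sum fun j _ => columnCount_le_columnBound w Λ (s j) (z j)

end ColumnCounts

/-- A randomly sampled version of `c'` is `x ↦ c' x ∘ s` for a uniformly random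
`s : Fin n → Fin n'`, so the expectation is the average over all `s`. -/
theorem stmt_17_general
    {F : Type} [Fintype F] [DecidableEq F]
    (q k n' : ℕ) (hq : q = Fintype.card F)
    (ε : ℝ) (hε0 : 0 < ε)
    (c' : (Fin k → F) → Fin n' → F)
    (hdist : ∀ x y : Fin k → F, x ≠ y →
      1 - 1 / (q : ℝ) - ε ^ 2 / 2 ≤ rdist (c' x) (c' y))
    (L : ℕ) (hL1 : 2 / ε ^ 2 ≤ (L : ℝ))
    (n : ℕ)
    (Λ : Finset (Fin k → F)) (hΛ : Λ.card = L) :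
    ((Fintype.card (Fin n → Fin n') : ℝ))⁻¹ *
        ∑ s : Fin n → Fin n',
          (⨆ z : Fin n → F, ∑ x ∈ Λ, (agr (fun j => c' x (s j)) z : ℝ))
      ≤ n * L * (1 / (q : ℝ) + ε) := by
  subst hq hΛ
  have hLε : 2 ≤ (#Λ : ℝ) * ε ^ 2 := (div_le_iff₀ (by positivity)).1 hL1
  have hagr (x) (_ : x ∈ Λ) (y) (_ : y ∈ Λ) (hxy : x ≠ y) :
      (agr (c' x) (c' y) : ℝ) ≤ n' * (1 / Fintype.card F + ε ^ 2 / 2) := by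
    rw [agr_eq_mul_one_sub_rdist]
    gcongr
    linarith [hdist x y hxy]
  have hJohnson := sum_columnBound_le c' Λ hε0.le hLε hagr
  calc _ ≤ ((Fintype.card (Fin n → Fin n') : ℝ))⁻¹ *
          ∑ s : Fin n → Fin n', ∑ j, columnBound c' Λ (s j) := by
        gcongr with s
        exact iSup_sum_agr_comp_le c' Λ s
    _ = n * ((n' : ℝ)⁻¹ * ∑ t, columnBound c' Λ t) := by
        rw [inv_card_mul_sum_sum_comp_apply, Fintype.card_fin, Fintype.card_fin]
    _ ≤ n * (#Λ * (1 / Fintype.card F + ε)) := by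
        refine mul_le_mul_of_nonneg_left ?_ n.cast_nonneg
        exact inv_mul_le_of_le_mul₀ n'.cast_nonneg (by positivity)
          (hJohnson.trans_eq (mul_assoc _ _ _))
    _ = _ := by ring

/-- the bound on the quantity 𝓔 from the proof of Corollary 4.2.
A randomly sampled version of `c'` is given by a uniformly random sampling map
`s : Fin n → Fin n'`, via `x ↦ (c' x) ∘ s`; the expectation over the sampling
is the uniform average over all `s`. -/
theorem stmt_17
    {F : Type} [Field F] [Fintype F] [DecidableEq F]
    (q k n' : ℕ) (hq : q = Fintype.card F) (hk : 0 < k) (hn' : 0 < n')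
    (ε : ℝ) (hε0 : 0 < ε) (hε1 : ε ≤ 1)
    (c' : (Fin k → F) → Fin n' → F) (hinj : Function.Injective c')
    (hdist : ∀ x y : Fin k → F, x ≠ y →
      1 - 1 / (q : ℝ) - ε ^ 2 / 2 ≤ rdist (c' x) (c' y))
    (L : ℕ) (hL1 : 2 / ε ^ 2 ≤ (L : ℝ)) (hL2 : L ≤ q ^ k)
    (n : ℕ) (hn : 1 ≤ n)
    (Λ : Finset (Fin k → F)) (hΛ : Λ.card = L) :
    ((Fintype.card (Fin n → Fin n') : ℝ))⁻¹ *
        ∑ s : Fin n → Fin n',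
          (⨆ z : Fin n → F, ∑ x ∈ Λ, (agr (fun j => c' x (s j)) z : ℝ))
      ≤ n * L * (1 / (q : ℝ) + ε) :=
  stmt_17_general q k n' hq ε hε0 c' hdist L hL1 n Λ hΛ
end
end

section
/- Let q be a prime power, n, k positive integers, c : 𝔽_q^k → 𝔽_q^n any map, z ∈ 𝔽_q^n, and Λ ⊆ 𝔽_q^k with |Λ| = L. For each coordinate j ∈ {1,…,n} let a_j = |{x ∈ Λ : c(x)_j = z_j}|. Then Σ_{j=1}^n binom(a_j, 2) ≤ L(L−1)n/2 − (n/2) · Σ_{(x,y) : x,y ∈ Λ, x ≠ y} d(c(x), c(y)), where the last sum ranges over ordered pairs of distinct elements of Λ. -/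
/-!
Count the ordered pairs of distinct elements of `Λ` whose codewords agree at coordinate `j`.
The pairs inside `{x ∈ Λ : c(x)_j = z_j}` already give `a_j (a_j - 1)` of them. Summed over `j`,
agreeing and disagreeing pairs number `n L (L - 1)`, and the disagreeing ones add up to the total
Hamming distance, which is `n` times the sum of the relative distances.
-/

open Finset

noncomputable section

theorem Finset.sum_offDiag_eq_sum_sum_erase {α M : Type*} [DecidableEq α] [AddCommMonoid M]
    (s : Finset α) (f : α × α → M) :
    ∑ p ∈ s.offDiag, f p = ∑ x ∈ s, ∑ y ∈ s.erase x, f (x, y) :=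
  sum_finset_product _ _ _ fun p => by
    rw [mem_offDiag, mem_erase]
    grind

theorem Finset.natCast_card_offDiag {α R : Type*} [CommRing R] (s : Finset α) :
    (#s.offDiag : R) = #s * (#s - 1) := by
  rw [offDiag_card, Nat.cast_sub (Nat.le_mul_self _)]
  push_cast
  ring

theorem Finset.card_offDiag_filter_eq_le {α β : Type*} [DecidableEq β] (s : Finset α) (g : α → β) (b : β) :
    #(s.filter (g · = b)).offDiag ≤ #{p ∈ s.offDiag | g p.1 = g p.2} := by
  refine card_le_card fun p hp => ?_
  simp only [mem_offDiag, mem_filter] at hp ⊢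
  obtain ⟨⟨hp₁, hg₁⟩, ⟨hp₂, hg₂⟩, hne⟩ := hp
  exact ⟨⟨hp₁, hp₂, hne⟩, hg₁.trans hg₂.symm⟩

theorem Finset.sum_offDiag_hammingDist_add_sum_card_agree {α ι β : Type*} [Fintype ι]
    [DecidableEq β] (s : Finset α) (w : α → ι → β) :
    ∑ p ∈ s.offDiag, hammingDist (w p.1) (w p.2) + ∑ i, #{p ∈ s.offDiag | w p.1 i = w p.2 i}
      = Fintype.card ι * #s.offDiag := by
  have hdist : ∑ p ∈ s.offDiag, hammingDist (w p.1) (w p.2)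
      = ∑ i, #{p ∈ s.offDiag | w p.1 i ≠ w p.2 i} := by
    simp only [hammingDist, card_filter]
    exact sum_comm
  rw [hdist, ← sum_add_distrib]
  simp only [add_comm, card_filter_add_card_filter_not, sum_const, card_univ, smul_eq_mul]

theorem natCast_mul_rdist {F : Type} [DecidableEq F] {n : ℕ} (u v : Fin n → F) :
    (n : ℝ) * rdist u v = hammingDist u v := by
  rcases n.eq_zero_or_pos with rfl | hn
  · simp [Subsingleton.elim u v]
  · exact mul_div_cancel₀ (hammingDist u v : ℝ) (Nat.cast_ne_zero.mpr hn.ne')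

theorem stmt_19_general
    {F : Type} [DecidableEq F]
    (n k : ℕ)
    (c : (Fin k → F) → Fin n → F)
    (z : Fin n → F)
    (Λ : Finset (Fin k → F)) (L : ℕ) (hΛ : Λ.card = L)
    (a : Fin n → ℕ) (ha : ∀ j, a j = (Λ.filter (fun x => c x j = z j)).card) :
    ∑ j : Fin n, ((a j).choose 2 : ℝ)
      ≤ (L : ℝ) * ((L : ℝ) - 1) * n / 2
        - ((n : ℝ) / 2) * ∑ x ∈ Λ, ∑ y ∈ Λ.erase x, rdist (c x) (c y) := by
  have hpairs : (∑ p ∈ Λ.offDiag, hammingDist (c p.1) (c p.2) : ℝ)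
      + ∑ j, (#{p ∈ Λ.offDiag | c p.1 j = c p.2 j} : ℝ) = n * (L * (L - 1)) := by
    have := sum_offDiag_hammingDist_add_sum_card_agree Λ c
    rw [Fintype.card_fin] at this
    rw [← hΛ, ← natCast_card_offDiag]
    exact_mod_cast this
  have hdist : (n : ℝ) / 2 * ∑ x ∈ Λ, ∑ y ∈ Λ.erase x, rdist (c x) (c y)
      = (∑ p ∈ Λ.offDiag, hammingDist (c p.1) (c p.2) : ℝ) / 2 := by
    rw [← sum_offDiag_eq_sum_sum_erase Λ (fun p => rdist (c p.1) (c p.2)), mul_sum, sum_div]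
    refine sum_congr rfl fun p _ => ?_
    rw [← natCast_mul_rdist]
    ring
  have hfibre : ∀ j, (a j : ℝ) * (a j - 1) ≤ #{p ∈ Λ.offDiag | c p.1 j = c p.2 j} := fun j => by
    rw [ha j, ← natCast_card_offDiag]
    exact_mod_cast card_offDiag_filter_eq_le Λ (c · j) (z j)
  calc ∑ j, ((a j).choose 2 : ℝ)
      ≤ ∑ j, (#{p ∈ Λ.offDiag | c p.1 j = c p.2 j} : ℝ) / 2 := by
        refine sum_le_sum fun j _ => ?_
        rw [Nat.cast_choose_two]
        linarith [hfibre j]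
    _ = _ := by
        rw [hdist, ← sum_div]
        linarith

/-- the key counting inequality from the proof of the paper's
second average-radius Johnson bound (Theorem A.2).  Here
`a j = |{x ∈ Λ : c(x)_j = z_j}|` and the double sum ranges over ordered pairs
of distinct elements of `Λ`. -/
theorem stmt_19
    {F : Type} [Field F] [Fintype F] [DecidableEq F]
    (n k : ℕ) (hn : 0 < n) (hk : 0 < k)
    (c : (Fin k → F) → Fin n → F)
    (z : Fin n → F)
    (Λ : Finset (Fin k → F)) (L : ℕ) (hΛ : Λ.card = L)
    (a : Fin n → ℕ) (ha : ∀ j, a j = (Λ.filter (fun x => c x j = z j)).card) :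
    ∑ j : Fin n, ((a j).choose 2 : ℝ)
      ≤ (L : ℝ) * ((L : ℝ) - 1) * n / 2
        - ((n : ℝ) / 2) * ∑ x ∈ Λ, ∑ y ∈ Λ.erase x, rdist (c x) (c y) :=
  stmt_19_general n k c z Λ L hΛ a ha
end
end
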